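/- arXiv:2309.00788 — 3 statements merged into one kernel-verified Lean document; each statement's English description precedes it below -/
import Mathlib

section
/- For every f in the spectral Barron space ℬ^s(ℝ^d) (i.e., f̂ measurable with ∫(1+|ξ|^s)|f̂(ξ)|dξ < ∞), the Besov norm satisfies ‖f‖_{B^s_{∞,1}} ≤ 2^s ‖f‖_{ℬ^s}, where ‖f‖_{B^s_{∞,1}} = ∑_{j≥0} 2^{sj} ‖(φ_j f̂)^∨‖_{L^∞} for a standard Littlewood–Paley partition of unity {φ_j}. -/
/-!
The inverse Fourier transform of `φ_j g` is bounded pointwise by `‖φ_j g‖_{L¹}`, and on the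
support of `φ_j` the weight satisfies `2^{sj} ≤ 2^s (1 + |ξ|^s)`. Summing over `j` and using
`∑ φ_j = 1` gives the bound. The estimates use lower Lebesgue integrals, which are monotone and
superadditive without measurability assumptions: the `φ_j` are not assumed measurable.
-/

open MeasureTheory FourierTransform ENNReal

open RealInnerProductSpace in
theorem Real.eLpNorm_top_fourierInv_le_lintegral_enorm {V E : Type*} [NormedAddCommGroup V]
    [InnerProductSpace ℝ V] [MeasurableSpace V] [BorelSpace V] [FiniteDimensional ℝ V]
    [NormedAddCommGroup E] [NormedSpace ℂ E] (f : V → E) :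
    eLpNorm (𝓕⁻ f) ⊤ volume ≤ ∫⁻ v, ‖f v‖ₑ := by
  rw [eLpNorm_exponent_top]
  refine eLpNormEssSup_le_of_ae_enorm_bound (Filter.Eventually.of_forall fun w => ?_)
  rw [Real.fourierInv_eq]
  refine (enorm_integral_le_lintegral_enorm _).trans_eq ?_
  simp only [Circle.smul_def, ← ofReal_norm, norm_smul, Circle.norm_coe, one_mul]

namespace MeasureTheory

variable {α ι : Type*} [MeasurableSpace α] {μ : Measure α}

theorem sum_lintegral_le_lintegral_sum (s : Finset ι) (f : ι → α → ℝ≥0∞) :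
    ∑ i ∈ s, ∫⁻ a, f i a ∂μ ≤ ∫⁻ a, ∑ i ∈ s, f i a ∂μ := by
  classical
  induction s using Finset.induction_on with
  | empty => simp
  | insert i s hi ih =>
    simp only [Finset.sum_insert hi]
    exact (add_le_add le_rfl ih).trans (le_lintegral_add _ _)

theorem tsum_lintegral_le_lintegral_tsum (f : ι → α → ℝ≥0∞) :
    ∑' i, ∫⁻ a, f i a ∂μ ≤ ∫⁻ a, ∑' i, f i a ∂μ := by
  rw [ENNReal.tsum_eq_iSup_sum]
  exact iSup_le fun s => (sum_lintegral_le_lintegral_sum s f).trans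
    (lintegral_mono fun a => ENNReal.sum_le_tsum s)

theorem tsum_lintegral_mul_le_lintegral {ψ : ι → α → ℝ≥0∞} (hψ : ∀ a, ∑' i, ψ i a ≤ 1)
    (T : α → ℝ≥0∞) : ∑' i, ∫⁻ a, ψ i a * T a ∂μ ≤ ∫⁻ a, T a ∂μ :=
  calc ∑' i, ∫⁻ a, ψ i a * T a ∂μ
      ≤ ∫⁻ a, (∑' i, ψ i a) * T a ∂μ := by
        simpa only [ENNReal.tsum_mul_right] using
          tsum_lintegral_le_lintegral_tsum (μ := μ) fun i a => ψ i a * T a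
    _ ≤ ∫⁻ a, T a ∂μ := lintegral_mono fun a => mul_le_of_le_one_left' (hψ a)

end MeasureTheory

theorem two_rpow_mul_le_of_dyadic {s r : ℝ} (hs : 0 ≤ s) (hr : 0 ≤ r) {j : ℕ}
    (hj : 1 ≤ j → (2 : ℝ) ^ (j - 1 : ℤ) ≤ r) :
    (2 : ℝ) ^ (s * j) ≤ 2 ^ s * (1 + r ^ s) := by
  rcases Nat.eq_zero_or_pos j with rfl | hj1
  · simpa using one_le_mul_of_one_le_of_one_le (Real.one_le_rpow one_le_two hs)
      (le_add_of_nonneg_right (Real.rpow_nonneg hr s))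
  calc (2 : ℝ) ^ (s * j) = 2 ^ s * ((2 : ℝ) ^ (j - 1 : ℤ)) ^ s := by
        rw [← Real.rpow_intCast, ← Real.rpow_mul zero_le_two, ← Real.rpow_add two_pos]
        push_cast
        ring_nf
    _ ≤ 2 ^ s * r ^ s := by gcongr; exact hj hj1
    _ ≤ 2 ^ s * (1 + r ^ s) := by gcongr; exact le_add_of_nonneg_left zero_le_one

theorem ENNReal.tsum_ofReal_le_one_of_tsum_eq_one {ι : Type*} {f : ι → ℝ} (hf : ∀ i, 0 ≤ f i)
    (h : ∑' i, f i = 1) : ∑' i, ENNReal.ofReal (f i) ≤ 1 := by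
  have hsum : Summable f := by
    by_contra hns
    simp [tsum_eq_zero_of_not_summable hns] at h
  rw [← ENNReal.ofReal_tsum_of_nonneg hf hsum, h, ENNReal.ofReal_one]

theorem stmt_9_general (d : ℕ) (s : ℝ) (hs : 0 ≤ s)
    (g : EuclideanSpace ℝ (Fin d) → ℂ)
    (hgint : Integrable (fun ξ => (1 + ‖ξ‖ ^ s) * ‖g ξ‖))
    (φ : ℕ → EuclideanSpace ℝ (Fin d) → ℝ)
    (hφ01 : ∀ j ξ, φ j ξ ∈ Set.Icc (0 : ℝ) 1)
    (hφj : ∀ j : ℕ, 1 ≤ j →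
      Function.support (φ j) ⊆ {ξ | 2 ^ (j - 1 : ℤ) ≤ ‖ξ‖ ∧ ‖ξ‖ ≤ 2 ^ (j + 1 : ℤ)})
    (hφsum : ∀ ξ, ∑' j : ℕ, φ j ξ = 1) :
    ∑' j : ℕ, ENNReal.ofReal ((2 : ℝ) ^ (s * j)) *
        eLpNorm (𝓕⁻ (fun ξ => (φ j ξ : ℂ) * g ξ)) ⊤ volume ≤
      ENNReal.ofReal ((2 : ℝ) ^ s * ∫ ξ, (1 + ‖ξ‖ ^ s) * ‖g ξ‖) := by
  have hφ_nonneg : ∀ j ξ, 0 ≤ φ j ξ := fun j ξ => (hφ01 j ξ).1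
  set T : EuclideanSpace ℝ (Fin d) → ℝ := fun ξ => (2 : ℝ) ^ s * ((1 + ‖ξ‖ ^ s) * ‖g ξ‖)
  have hweight : ∀ (j : ℕ) ξ, ENNReal.ofReal ((2 : ℝ) ^ (s * j)) * ‖(φ j ξ : ℂ) * g ξ‖ₑ ≤
      ENNReal.ofReal (φ j ξ) * ENNReal.ofReal (T ξ) := by
    intro j ξ
    rw [← ofReal_norm, ← ENNReal.ofReal_mul (by positivity), ← ENNReal.ofReal_mul (hφ_nonneg j ξ)]
    refine ENNReal.ofReal_le_ofReal ?_
    rw [norm_mul, Complex.norm_real, Real.norm_of_nonneg (hφ_nonneg j ξ)]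
    by_cases hξ : φ j ξ = 0
    · simp [hξ]
    have hdyadic := two_rpow_mul_le_of_dyadic hs (norm_nonneg ξ) fun hj => (hφj j hj hξ).1
    calc 2 ^ (s * j) * (φ j ξ * ‖g ξ‖) ≤ 2 ^ s * (1 + ‖ξ‖ ^ s) * (φ j ξ * ‖g ξ‖) := by
          have := hφ_nonneg j ξ
          gcongr
      _ = φ j ξ * T ξ := by ring
  calc ∑' j : ℕ, ENNReal.ofReal ((2 : ℝ) ^ (s * j)) *
        eLpNorm (𝓕⁻ (fun ξ => (φ j ξ : ℂ) * g ξ)) ⊤ volume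
      ≤ ∑' j : ℕ, ∫⁻ ξ, ENNReal.ofReal (φ j ξ) * ENNReal.ofReal (T ξ) :=
        ENNReal.tsum_le_tsum fun j =>
          (mul_le_mul_right (Real.eLpNorm_top_fourierInv_le_lintegral_enorm _) _).trans <|
            (lintegral_const_mul_le _ _).trans (lintegral_mono (hweight j))
    _ ≤ ∫⁻ ξ, ENNReal.ofReal (T ξ) := tsum_lintegral_mul_le_lintegral
        (fun ξ => ENNReal.tsum_ofReal_le_one_of_tsum_eq_one (hφ_nonneg · ξ) (hφsum ξ)) _
    _ = ENNReal.ofReal ((2 : ℝ) ^ s * ∫ ξ, (1 + ‖ξ‖ ^ s) * ‖g ξ‖) := by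
        rw [← integral_const_mul, ofReal_integral_eq_lintegral_ofReal (hgint.const_mul _)
          (Filter.Eventually.of_forall fun ξ => by positivity)]

/-- If `{φ_j}` is a Littlewood–Paley dyadic partition of unity and `f` has Fourier
transform `g` with `∫(1+|ξ|^s)|g| < ∞`, then
`∑_j 2^{sj} ‖(φ_j g)^∨‖_{L^∞} ≤ 2^s ∫(1+|ξ|^s)|g(ξ)| dξ`. -/
theorem stmt_9 (d : ℕ) (s : ℝ) (hs : 0 ≤ s)
    (g : EuclideanSpace ℝ (Fin d) → ℂ) (hg : Measurable g)
    (hgint : Integrable (fun ξ => (1 + ‖ξ‖ ^ s) * ‖g ξ‖))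
    (φ : ℕ → EuclideanSpace ℝ (Fin d) → ℝ)
    (hφ01 : ∀ j ξ, φ j ξ ∈ Set.Icc (0 : ℝ) 1)
    (hφ0 : Function.support (φ 0) ⊆ {ξ | ‖ξ‖ ≤ 2})
    (hφj : ∀ j : ℕ, 1 ≤ j →
      Function.support (φ j) ⊆ {ξ | 2 ^ (j - 1 : ℤ) ≤ ‖ξ‖ ∧ ‖ξ‖ ≤ 2 ^ (j + 1 : ℤ)})
    (hφsum : ∀ ξ, ∑' j : ℕ, φ j ξ = 1) :
    ∑' j : ℕ, ENNReal.ofReal ((2 : ℝ) ^ (s * j)) *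
        eLpNorm (𝓕⁻ (fun ξ => (φ j ξ : ℂ) * g ξ)) ⊤ volume ≤
      ENNReal.ofReal ((2 : ℝ) ^ s * ∫ ξ, (1 + ‖ξ‖ ^ s) * ‖g ξ‖) :=
  stmt_9_general d s hs g hgint φ hφ01 hφj hφsum
end

section
/- Let β(t) = ReLU(2t) - 2ReLU(2t-1) + ReLU(2t-2) (the tent function on [0,1]) and for n ≥ 1 define β_{,n}(t) = ∑_{j=0}^{n-1} β(nt - j) on [0,1]. For any function g: [0,1] → ℝ symmetric about 1/2 (g(1-t)=g(t)), define g_{,n}(t) = g(nt - j) for nt - j ∈ [0,1], j = 0,…,n-1. Then g_{,n₂} ∘ β_{,n₁} = g_{,2n₁n₂} on [0,1]. -/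
/-- `ReLU(t) = max(t,0)`. -/
noncomputable def relu (t : ℝ) : ℝ := max t 0

/-- The tent function `β(t) = ReLU(2t) - 2 ReLU(2t-1) + ReLU(2t-2)`. -/
noncomputable def tent (t : ℝ) : ℝ := relu (2 * t) - 2 * relu (2 * t - 1) + relu (2 * t - 2)

/-- `g_{,n}`, the `n`-fold periodic repetition of `g : [0,1] → ℝ` on `[0,1]`:
`g_{,n}(t) = g(nt - j)` for `nt - j ∈ [0,1]`. -/
noncomputable def per (g : ℝ → ℝ) (n : ℕ) (t : ℝ) : ℝ := g (n * t - ⌊(n : ℝ) * t⌋)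

/-- The sawtooth `β_{,n}(t) = ∑_{j=0}^{n-1} β(nt - j)`. -/
noncomputable def saw (n : ℕ) (t : ℝ) : ℝ := ∑ j ∈ Finset.range n, tent (n * t - j)

open Set

lemma tent_of_nonpos {s : ℝ} (h : s ≤ 0) : tent s = 0 := by
  simp only [tent, relu]
  rw [max_eq_right, max_eq_right, max_eq_right] <;> linarith

lemma tent_of_one_le {s : ℝ} (h : 1 ≤ s) : tent s = 0 := by
  simp only [tent, relu]
  rw [max_eq_left, max_eq_left, max_eq_left] <;> linarith

lemma tent_of_le_half {s : ℝ} (h₀ : 0 ≤ s) (h : s ≤ 1 / 2) : tent s = 2 * s := by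
  simp only [tent, relu]
  rw [max_eq_left, max_eq_right, max_eq_right] <;> linarith

lemma tent_of_half_le {s : ℝ} (h : 1 / 2 ≤ s) (h₁ : s ≤ 1) : tent s = 2 - 2 * s := by
  simp only [tent, relu]
  rw [max_eq_left, max_eq_left, max_eq_right] <;> linarith

lemma tent_sub_intCast_of_ne_floor (x : ℝ) {j : ℤ} (h : j ≠ ⌊x⌋) : tent (x - j) = 0 := by
  rcases h.lt_or_gt with h | h
  · apply tent_of_one_le
    have : (j : ℝ) + 1 ≤ ⌊x⌋ := by exact_mod_cast h
    linarith [Int.floor_le x]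
  · apply tent_of_nonpos
    have : (⌊x⌋ : ℝ) + 1 ≤ j := by exact_mod_cast h
    linarith [Int.lt_floor_add_one x]

lemma sum_range_tent_sub {n : ℕ} {x : ℝ} (h₀ : 0 ≤ x) (hn : x ≤ n) :
    ∑ j ∈ Finset.range n, tent (x - j) = tent (Int.fract x) := by
  have hfloor : ((⌊x⌋.toNat : ℕ) : ℝ) = ⌊x⌋ := by
    exact_mod_cast Int.toNat_of_nonneg (Int.floor_nonneg.2 h₀)
  rw [Finset.sum_eq_single ⌊x⌋.toNat, hfloor, Int.self_sub_floor]
  · intro j _ hj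
    apply tent_sub_intCast_of_ne_floor
    omega
  · intro hout
    have hle : (n : ℝ) ≤ ⌊x⌋ := by
      rw [← hfloor]
      exact_mod_cast not_lt.1 (Finset.mem_range.not.1 hout)
    have hx : (⌊x⌋ : ℝ) = x := le_antisymm (Int.floor_le x) (hn.trans hle)
    rw [hfloor, hx, sub_self, tent_of_nonpos le_rfl]

lemma saw_eq_tent_fract (n : ℕ) {t : ℝ} (ht : t ∈ Icc (0 : ℝ) 1) :
    saw n t = tent (Int.fract (n * t)) :=
  sum_range_tent_sub (by positivity [ht.1]) (mul_le_of_le_one_right n.cast_nonneg ht.2)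

lemma per_eq_apply_fract (g : ℝ → ℝ) (n : ℕ) (t : ℝ) : per g n t = g (Int.fract (n * t)) :=
  rfl

lemma per_mul (g : ℝ → ℝ) (m n : ℕ) (t : ℝ) :
    per g (m * n) t = per g m (Int.fract (n * t)) := by
  have : ((m * n : ℕ) : ℝ) * t = m * Int.fract (n * t) + ((m * ⌊(n : ℝ) * t⌋ : ℤ) : ℝ) := by
    rw [Int.fract]
    push_cast
    ring
  rw [per_eq_apply_fract, per_eq_apply_fract, this, Int.fract_add_intCast]

lemma apply_fract_neg_of_symm {g : ℝ → ℝ} (hg : ∀ t ∈ Icc (0 : ℝ) 1, g (1 - t) = g t) (y : ℝ) :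
    g (Int.fract (-y)) = g (Int.fract y) := by
  by_cases hy : Int.fract y = 0
  · rw [Int.fract_neg_eq_zero.2 hy, hy]
  · rw [Int.fract_neg hy]
    exact hg _ ⟨Int.fract_nonneg y, (Int.fract_lt_one y).le⟩

/-- The tent doubles the frequency of a function symmetric about `1/2`: on `[1/2, 1]` it is
the reflection `u ↦ 2 - 2u`, which the symmetry of `g` absorbs. -/
lemma per_tent_of_symm {g : ℝ → ℝ} (hg : ∀ t ∈ Icc (0 : ℝ) 1, g (1 - t) = g t) (n : ℕ)
    {u : ℝ} (hu : u ∈ Icc (0 : ℝ) 1) : per g n (tent u) = per g (2 * n) u := by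
  rw [per_eq_apply_fract, per_eq_apply_fract]
  push_cast
  rcases le_total u (1 / 2) with h | h
  · rw [tent_of_le_half hu.1 h, mul_left_comm, mul_assoc]
  · have : (n : ℝ) * (2 - 2 * u) = -(2 * n * u) + ((2 * n : ℤ) : ℝ) := by
      push_cast
      ring
    rw [tent_of_half_le h hu.2, this, Int.fract_add_intCast, apply_fract_neg_of_symm hg]

theorem stmt_14_general (g : ℝ → ℝ) (hg : ∀ t ∈ Set.Icc (0 : ℝ) 1, g (1 - t) = g t)
    (n₁ n₂ : ℕ) :
    ∀ t ∈ Set.Icc (0 : ℝ) 1, per g n₂ (saw n₁ t) = per g (2 * n₁ * n₂) t := by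
  intro t ht
  have hfract : Int.fract ((n₁ : ℝ) * t) ∈ Icc (0 : ℝ) 1 :=
    ⟨Int.fract_nonneg _, (Int.fract_lt_one _).le⟩
  rw [saw_eq_tent_fract n₁ ht, per_tent_of_symm hg n₂ hfract, ← per_mul,
    show 2 * n₁ * n₂ = 2 * n₂ * n₁ by ring]

/-- If `g` is symmetric about `1/2` then `g_{,n₂} ∘ β_{,n₁} = g_{,2n₁n₂}` on `[0,1]`. -/
theorem stmt_14 (g : ℝ → ℝ) (hg : ∀ t ∈ Set.Icc (0 : ℝ) 1, g (1 - t) = g t)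
    (n₁ n₂ : ℕ) (hn₁ : 1 ≤ n₁) (hn₂ : 1 ≤ n₂) :
    ∀ t ∈ Set.Icc (0 : ℝ) 1, per g n₂ (saw n₁ t) = per g (2 * n₁ * n₂) t :=
  stmt_14_general g hg n₁ n₂
end

section
/- Let n, R > 0 and f(x) = cos(2πn x₁) e^{-π|x|²/R} on ℝ^d. Then the Fourier transform is f̂(ξ) = R^{d/2} e^{-πR(|ξ|²+n²)} cosh(2πnRξ₁), which is positive, and ∫_{ℝ^d} f̂(ξ) dξ = 1, while ∫_{ℝ^d} |ξ|₁ f̂(ξ) dξ ≤ n + d/(π√R), where |ξ|₁ denotes the ℓ¹ norm. -/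
/-!
The function is the average of the two modulated Gaussians `e^{±2πi⟪w, x⟫} e^{-π‖x‖²/R}` with
`w = n e₁`, so its Fourier transform is the average of the translated Gaussians
`R^{d/2} e^{-πR‖ξ ∓ w‖²}`, each of total mass `1`. These are products of one-dimensional
Gaussians, so by Fubini the `ℓ¹` moment splits into one-dimensional first absolute moments, and
`|t| ≤ |c| + |t - c|` bounds the moment of the Gaussian centred at `c` by
`|c| + √R ∫ |t| e^{-πRt²} dt = |c| + 1 / (π√R)`.
-/

open MeasureTheory FourierTransform Real

open scoped RealInnerProductSpace

section InnerProductSpace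

variable {V : Type*} [NormedAddCommGroup V] [InnerProductSpace ℝ V]

noncomputable def gaussianBump (R : ℝ) (w ξ : V) : ℝ :=
  R ^ ((Module.finrank ℝ V : ℝ) / 2) * rexp (-π * R * ‖ξ - w‖ ^ 2)

theorem gaussianBump_add_gaussianBump_neg (R : ℝ) (w ξ : V) :
    (gaussianBump R w ξ + gaussianBump R (-w) ξ) / 2 =
      R ^ ((Module.finrank ℝ V : ℝ) / 2) * rexp (-π * R * (‖ξ‖ ^ 2 + ‖w‖ ^ 2)) *
        cosh (2 * π * R * ⟪w, ξ⟫) := by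
  have hsub : -π * R * ‖ξ - w‖ ^ 2 =
      -π * R * (‖ξ‖ ^ 2 + ‖w‖ ^ 2) + 2 * π * R * ⟪w, ξ⟫ := by
    rw [norm_sub_sq_real, real_inner_comm]; ring
  have hadd : -π * R * ‖ξ - -w‖ ^ 2 =
      -π * R * (‖ξ‖ ^ 2 + ‖w‖ ^ 2) + -(2 * π * R * ⟪w, ξ⟫) := by
    rw [sub_neg_eq_add, norm_add_sq_real, real_inner_comm]; ring
  rw [gaussianBump, gaussianBump, hsub, hadd, cosh_eq, exp_add, exp_add]
  ring

theorem gaussianBump_eq_zero_sub (R : ℝ) (w ξ : V) :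
    gaussianBump R w ξ = gaussianBump R 0 (ξ - w) := by
  rw [gaussianBump, gaussianBump, sub_zero]

theorem gaussianBump_pos {R : ℝ} (hR : 0 < R) (w ξ : V) : 0 < gaussianBump R w ξ := by
  unfold gaussianBump; positivity

variable [FiniteDimensional ℝ V] [MeasurableSpace V] [BorelSpace V]

theorem integral_gaussianBump {R : ℝ} (hR : 0 < R) (w : V) :
    ∫ ξ, gaussianBump R w ξ = 1 := by
  have hgauss := GaussianFourier.integral_rexp_neg_mul_sq_norm (V := V) (mul_pos pi_pos hR)
  simp only [gaussianBump, neg_mul] at hgauss ⊢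
  rw [integral_const_mul, integral_sub_right_eq_self (fun ξ => rexp (-(π * R * ‖ξ‖ ^ 2))) w,
    hgauss, show π / (π * R) = R⁻¹ by field_simp, inv_rpow hR.le]
  exact mul_inv_cancel₀ (rpow_pos_of_pos hR _).ne'

theorem integrable_gaussianBump {R : ℝ} (hR : 0 < R) (w : V) :
    Integrable (gaussianBump R w) :=
  Integrable.of_integral_ne_zero (by rw [integral_gaussianBump hR]; exact one_ne_zero)

theorem fourier_cexp_neg_mul_sq_norm_add_inner {R : ℝ} (hR : 0 < R) (w ξ : V) :
    𝓕 (fun x : V => Complex.exp (-(π / R : ℝ) * ‖x‖ ^ 2 + 2 * π * Complex.I * ⟪w, x⟫)) ξ =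
      gaussianBump R w ξ := by
  have hb : 0 < ((π / R : ℝ) : ℂ).re := by simpa using div_pos pi_pos hR
  rw [fourier_gaussian_innerProductSpace' hb, gaussianBump, norm_sub_rev, Complex.ofReal_mul,
    Complex.ofReal_exp, Complex.ofReal_cpow hR.le]
  have hπR : (π : ℂ) / ((π / R : ℝ) : ℂ) = R := by
    push_cast; field_simp [Complex.ofReal_ne_zero.mpr pi_ne_zero]
  rw [hπR]
  congr 2
  · push_cast; ring
  · push_cast; field_simp

theorem fourier_add_apply {f g : V → ℂ} (hf : Integrable f) (hg : Integrable g) (ξ : V) :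
    𝓕 (f + g) ξ = 𝓕 f ξ + 𝓕 g ξ :=
  congrFun (VectorFourier.fourierIntegral_add continuous_fourierChar continuous_inner hf hg) ξ

theorem fourier_const_smul_apply (c : ℂ) (f : V → ℂ) (ξ : V) : 𝓕 (c • f) ξ = c * 𝓕 f ξ :=
  congrFun (VectorFourier.fourierIntegral_const_smul _ _ _ f c) ξ

theorem fourier_cos_inner_mul_gaussian {R : ℝ} (hR : 0 < R) (w ξ : V) :
    𝓕 (fun x : V => ((cos (2 * π * ⟪w, x⟫) * rexp (-π * ‖x‖ ^ 2 / R) : ℝ) : ℂ)) ξ =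
      ((gaussianBump R w ξ + gaussianBump R (-w) ξ) / 2 : ℝ) := by
  set g : V → V → ℂ := fun v x =>
    Complex.exp (-(π / R : ℝ) * ‖x‖ ^ 2 + 2 * π * Complex.I * ⟪v, x⟫)
  have hb : 0 < ((π / R : ℝ) : ℂ).re := by simpa using div_pos pi_pos hR
  have hg : ∀ v, Integrable (g v) := fun v =>
    GaussianFourier.integrable_cexp_neg_mul_sq_norm_add hb _ v
  have hsplit : (fun x : V => ((cos (2 * π * ⟪w, x⟫) * rexp (-π * ‖x‖ ^ 2 / R) : ℝ) : ℂ)) =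
      (1 / 2 : ℂ) • (g w + g (-w)) := by
    funext x
    simp only [g, Pi.smul_apply, Pi.add_apply, smul_eq_mul, inner_neg_left,
      Complex.ofReal_neg]
    rw [show -((π / R : ℝ) : ℂ) * ‖x‖ ^ 2 + 2 * π * Complex.I * ⟪w, x⟫ =
        ((-π * ‖x‖ ^ 2 / R : ℝ) : ℂ) + ((2 * π * ⟪w, x⟫ : ℝ) : ℂ) * Complex.I by push_cast; ring,
      show -((π / R : ℝ) : ℂ) * ‖x‖ ^ 2 + 2 * π * Complex.I * -⟪w, x⟫ =
        ((-π * ‖x‖ ^ 2 / R : ℝ) : ℂ) + -((2 * π * ⟪w, x⟫ : ℝ) : ℂ) * Complex.I by push_cast; ring,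
      Complex.exp_add, Complex.exp_add, Complex.ofReal_mul, Complex.ofReal_cos,
      Complex.ofReal_exp, Complex.cos]
    ring
  rw [hsplit, fourier_const_smul_apply, fourier_add_apply (hg w) (hg (-w)),
    fourier_cexp_neg_mul_sq_norm_add_inner hR, fourier_cexp_neg_mul_sq_norm_add_inner hR]
  push_cast; ring

end InnerProductSpace

section Real

theorem integral_abs_mul_exp_neg_mul_sq {b : ℝ} (hb : 0 < b) :
    ∫ x : ℝ, |x| * rexp (-b * x ^ 2) = b⁻¹ := by
  have hIoi : ∫ x in Set.Ioi (0 : ℝ), x * rexp (-b * x ^ 2) = (2 * b)⁻¹ := by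
    have := integral_mul_cexp_neg_mul_sq (b := (b : ℂ)) (by simpa using hb)
    rw [← Complex.ofReal_inj, ← integral_complex_ofReal]
    push_cast
    exact this
  have hcomp := integral_comp_abs (f := fun x => x * rexp (-b * x ^ 2))
  simp only [sq_abs] at hcomp
  rw [hcomp, hIoi]
  field_simp

theorem gaussianBump_real_eq (R c t : ℝ) :
    gaussianBump R c t = √R * rexp (-π * R * (t - c) ^ 2) := by
  rw [gaussianBump, Module.finrank_self, norm_eq_abs, sq_abs, sqrt_eq_rpow]
  norm_num

variable {R : ℝ} (hR : 0 < R)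
include hR

theorem integral_abs_sub_mul_gaussianBump (c : ℝ) :
    ∫ t : ℝ, |t - c| * gaussianBump R c t = 1 / (π * √R) := by
  simp only [gaussianBump_eq_zero_sub R c]
  rw [integral_sub_right_eq_self (fun u => |u| * gaussianBump R 0 u) c]
  simp only [gaussianBump_real_eq, sub_zero, mul_left_comm |_|, neg_mul π R]
  rw [integral_const_mul, integral_abs_mul_exp_neg_mul_sq (mul_pos pi_pos hR)]
  field_simp
  exact sq_sqrt hR.le

theorem integrable_abs_sub_mul_gaussianBump (c : ℝ) :
    Integrable fun t : ℝ => |t - c| * gaussianBump R c t :=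
  Integrable.of_integral_ne_zero (by
    rw [integral_abs_sub_mul_gaussianBump hR]; positivity)

theorem abs_mul_gaussianBump_le (c t : ℝ) :
    |t| * gaussianBump R c t ≤ |c| * gaussianBump R c t + |t - c| * gaussianBump R c t := by
  rw [← add_mul]
  exact mul_le_mul_of_nonneg_right (by simpa using abs_add_le c (t - c))
    (gaussianBump_pos hR c t).le

theorem integrable_abs_mul_gaussianBump (c : ℝ) :
    Integrable fun t : ℝ => |t| * gaussianBump R c t := by
  refine (((integrable_gaussianBump hR c).const_mul |c|).add
    (integrable_abs_sub_mul_gaussianBump hR c)).mono' (by unfold gaussianBump; fun_prop)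
    (.of_forall fun t => ?_)
  rw [norm_of_nonneg (mul_nonneg (abs_nonneg t) (gaussianBump_pos hR c t).le)]
  exact abs_mul_gaussianBump_le hR c t

theorem integral_abs_mul_gaussianBump_le (c : ℝ) :
    ∫ t : ℝ, |t| * gaussianBump R c t ≤ |c| + 1 / (π * √R) := by
  have hc := (integrable_gaussianBump hR c).const_mul |c|
  have hsub := integrable_abs_sub_mul_gaussianBump hR c
  calc ∫ t : ℝ, |t| * gaussianBump R c t
      ≤ ∫ t : ℝ, |c| * gaussianBump R c t + |t - c| * gaussianBump R c t :=
        integral_mono (integrable_abs_mul_gaussianBump hR c) (hc.add hsub)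
          (abs_mul_gaussianBump_le hR c)
    _ = |c| + 1 / (π * √R) := by
        rw [integral_add hc hsub, integral_const_mul, integral_gaussianBump hR, mul_one,
          integral_abs_sub_mul_gaussianBump hR]

end Real

section EuclideanSpace

open Finset

variable {ι : Type*} [Fintype ι]

theorem integrable_euclideanSpace_prod {f : ι → ℝ → ℝ} (hf : ∀ i, Integrable (f i)) :
    Integrable fun ξ : EuclideanSpace ℝ ι => ∏ i, f i (ξ i) := by
  have e := (EuclideanSpace.volume_preserving_symm_measurableEquiv_toLp ι).symm
  rw [← e.integrable_comp_emb (MeasurableEquiv.measurableEmbedding _)]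
  exact Integrable.fintype_prod hf

theorem integral_euclideanSpace_prod (f : ι → ℝ → ℝ) :
    ∫ ξ : EuclideanSpace ℝ ι, ∏ i, f i (ξ i) = ∏ i, ∫ t, f i t := by
  have e := (EuclideanSpace.volume_preserving_symm_measurableEquiv_toLp ι).symm
  rw [← e.integral_comp (MeasurableEquiv.measurableEmbedding _)]
  exact integral_fintype_prod_eq_prod f

section DecidableEq

variable [DecidableEq ι]

theorem apply_mul_prod_eq_prod_update (g : ℝ → ℝ) (f : ι → ℝ → ℝ) (i : ι) (x : ι → ℝ) :
    g (x i) * ∏ j, f j (x j) = ∏ j, Function.update f i (fun t => g t * f i t) j (x j) := by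
  rw [← mul_prod_erase univ _ (mem_univ i), ← mul_prod_erase univ _ (mem_univ i),
    Function.update_self, mul_assoc]
  congr 2
  exact prod_congr rfl fun j hj => by rw [Function.update_of_ne (ne_of_mem_erase hj)]

theorem integral_apply_mul_euclideanSpace_prod (g : ℝ → ℝ) (f : ι → ℝ → ℝ) (i : ι) :
    ∫ ξ : EuclideanSpace ℝ ι, g (ξ i) * ∏ j, f j (ξ j) =
      (∫ t, g t * f i t) * ∏ j ∈ univ.erase i, ∫ t, f j t := by
  simp only [apply_mul_prod_eq_prod_update g f i]
  rw [integral_euclideanSpace_prod, ← mul_prod_erase univ _ (mem_univ i), Function.update_self]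
  congr 1
  exact prod_congr rfl fun j hj => by rw [Function.update_of_ne (ne_of_mem_erase hj)]

end DecidableEq

theorem integrable_apply_mul_euclideanSpace_prod {g : ℝ → ℝ} {f : ι → ℝ → ℝ} {i : ι}
    (hg : Integrable fun t => g t * f i t) (hf : ∀ j, Integrable (f j)) :
    Integrable fun ξ : EuclideanSpace ℝ ι => g (ξ i) * ∏ j, f j (ξ j) := by
  classical
  simp only [apply_mul_prod_eq_prod_update g f i]
  refine integrable_euclideanSpace_prod fun j => ?_
  rcases eq_or_ne j i with rfl | hj
  · simpa using hg
  · simpa [hj] using hf j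

theorem gaussianBump_euclideanSpace_eq_prod {R : ℝ} (hR : 0 ≤ R)
    (w ξ : EuclideanSpace ℝ ι) :
    gaussianBump R w ξ = ∏ i, gaussianBump R (w i) (ξ i) := by
  simp only [gaussianBump, finrank_euclideanSpace, Module.finrank_self, prod_mul_distrib,
    prod_const, card_univ, ← exp_sum, ← mul_sum, EuclideanSpace.norm_sq_eq]
  rw [← rpow_mul_natCast hR]
  congr 2
  ring

variable {R : ℝ} (hR : 0 < R)
include hR

theorem integrable_abs_apply_mul_gaussianBump (w : EuclideanSpace ℝ ι) (i : ι) :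
    Integrable fun ξ : EuclideanSpace ℝ ι => |ξ i| * gaussianBump R w ξ := by
  simp only [gaussianBump_euclideanSpace_eq_prod hR.le w]
  exact integrable_apply_mul_euclideanSpace_prod (integrable_abs_mul_gaussianBump hR (w i))
    fun j => integrable_gaussianBump hR (w j)

theorem integral_abs_apply_mul_gaussianBump_le (w : EuclideanSpace ℝ ι) (i : ι) :
    ∫ ξ : EuclideanSpace ℝ ι, |ξ i| * gaussianBump R w ξ ≤ |w i| + 1 / (π * √R) := by
  classical
  simp only [gaussianBump_euclideanSpace_eq_prod hR.le w]
  rw [integral_apply_mul_euclideanSpace_prod]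
  simp only [integral_gaussianBump hR, prod_const_one, mul_one]
  exact integral_abs_mul_gaussianBump_le hR (w i)

theorem integrable_sum_abs_mul_gaussianBump (w : EuclideanSpace ℝ ι) :
    Integrable fun ξ : EuclideanSpace ℝ ι => (∑ i, |ξ i|) * gaussianBump R w ξ := by
  simp only [sum_mul]
  exact integrable_finsetSum _ fun i _ => integrable_abs_apply_mul_gaussianBump hR w i

theorem integral_sum_abs_mul_gaussianBump_le (w : EuclideanSpace ℝ ι) :
    ∫ ξ : EuclideanSpace ℝ ι, (∑ i, |ξ i|) * gaussianBump R w ξ ≤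
      ∑ i, |w i| + Fintype.card ι / (π * √R) := by
  simp only [sum_mul]
  rw [integral_finsetSum _ fun i _ => integrable_abs_apply_mul_gaussianBump hR w i]
  calc ∑ i, ∫ ξ : EuclideanSpace ℝ ι, |ξ i| * gaussianBump R w ξ
      ≤ ∑ i, (|w i| + 1 / (π * √R)) :=
        sum_le_sum fun i _ => integral_abs_apply_mul_gaussianBump_le hR w i
    _ = ∑ i, |w i| + Fintype.card ι / (π * √R) := by
        rw [sum_add_distrib, sum_const, card_univ, nsmul_eq_mul, mul_one_div]

end EuclideanSpace

/-- For `f(x) = cos(2πn x₁) e^{-π|x|²/R}`, the Fourier transform is the positive function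
`f̂(ξ) = R^{d/2} e^{-πR(|ξ|²+n²)} cosh(2πnRξ₁)`, with `∫ f̂ = 1` and
`∫ |ξ|₁ f̂(ξ) dξ ≤ n + d/(π√R)`. -/
theorem stmt_17 (d : ℕ) (hd : 0 < d) (n R : ℝ) (hn : 0 < n) (hR : 0 < R) :
    (∀ ξ : EuclideanSpace ℝ (Fin d),
      𝓕 (fun x : EuclideanSpace ℝ (Fin d) =>
          ((Real.cos (2 * π * n * x ⟨0, hd⟩) * Real.exp (-π * ‖x‖ ^ 2 / R) : ℝ) : ℂ)) ξ =
        ((R ^ ((d : ℝ) / 2) * Real.exp (-π * R * (‖ξ‖ ^ 2 + n ^ 2)) *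
            Real.cosh (2 * π * n * R * ξ ⟨0, hd⟩) : ℝ) : ℂ)) ∧
    (∀ ξ : EuclideanSpace ℝ (Fin d),
      0 < R ^ ((d : ℝ) / 2) * Real.exp (-π * R * (‖ξ‖ ^ 2 + n ^ 2)) *
          Real.cosh (2 * π * n * R * ξ ⟨0, hd⟩)) ∧
    (∫ ξ : EuclideanSpace ℝ (Fin d),
        R ^ ((d : ℝ) / 2) * Real.exp (-π * R * (‖ξ‖ ^ 2 + n ^ 2)) *
          Real.cosh (2 * π * n * R * ξ ⟨0, hd⟩) = 1) ∧
    (∫ ξ : EuclideanSpace ℝ (Fin d),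
        (∑ i, |ξ i|) * (R ^ ((d : ℝ) / 2) * Real.exp (-π * R * (‖ξ‖ ^ 2 + n ^ 2)) *
          Real.cosh (2 * π * n * R * ξ ⟨0, hd⟩)) ≤ n + d / (π * Real.sqrt R)) := by
  set w : EuclideanSpace ℝ (Fin d) := EuclideanSpace.single ⟨0, hd⟩ n
  have hinner (x : EuclideanSpace ℝ (Fin d)) : ⟪w, x⟫ = n * x ⟨0, hd⟩ := by
    simp [w, EuclideanSpace.inner_single_left]
  have hprofile (ξ : EuclideanSpace ℝ (Fin d)) :
      R ^ ((d : ℝ) / 2) * rexp (-π * R * (‖ξ‖ ^ 2 + n ^ 2)) *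
          cosh (2 * π * n * R * ξ ⟨0, hd⟩) =
        (gaussianBump R w ξ + gaussianBump R (-w) ξ) / 2 := by
    rw [gaussianBump_add_gaussianBump_neg, hinner, finrank_euclideanSpace_fin,
      PiLp.norm_single, norm_eq_abs, sq_abs]
    ring_nf
  have hw : ∑ i, |w i| = n := by simp [w, apply_ite, abs_of_pos hn]
  have hw' : ∑ i, |(-w) i| = n := by simpa using hw
  refine ⟨fun ξ => ?_, fun ξ => by positivity, ?_, ?_⟩
  · rw [hprofile, ← fourier_cos_inner_mul_gaussian hR]
    simp only [hinner, mul_assoc]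
  · simp only [hprofile]
    rw [integral_div,
      integral_add (integrable_gaussianBump hR w) (integrable_gaussianBump hR (-w)),
      integral_gaussianBump hR, integral_gaussianBump hR]
    norm_num
  · simp_rw [hprofile, ← mul_div_assoc, mul_add]
    rw [integral_div, integral_add (integrable_sum_abs_mul_gaussianBump hR w)
      (integrable_sum_abs_mul_gaussianBump hR (-w))]
    have hmoment := integral_sum_abs_mul_gaussianBump_le hR w
    have hmoment' := integral_sum_abs_mul_gaussianBump_le hR (-w)
    rw [hw, Fintype.card_fin] at hmoment
    rw [hw', Fintype.card_fin] at hmoment'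
    linarith
end
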